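/- Let p be a prime and n an integer with p ∤ n. Then (1/|SL₂(ℤ/pℤ)|) · Σ_{w ∈ SL₂(ℤ/pℤ)} c_p(d(w) − n) = 1/(p² − 1), where d(w) denotes the bottom-right entry of w (lifted to ℤ). -/

import Mathlib

/-- The Ramanujan sum `c_q(m) = Σ_{a ∈ (ℤ/qℤ)ˣ} e^{2πi a m / q}`. -/
noncomputable def ramanujanSum (q : ℕ) [NeZero q] (m : ℤ) : ℂ :=
  ∑ a : (ZMod q)ˣ,
    Complex.exp (2 * Real.pi * Complex.I * (((a : ZMod q).val : ℂ) * (m : ℂ)) / (q : ℂ))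

/-- The bottom-right entry of `w ∈ SL₂(ℤ/qℤ)`, lifted to `ℤ`. -/
def dEntry {q : ℕ} (w : Matrix.SpecialLinearGroup (Fin 2) (ZMod q)) : ℤ :=
  ((w : Matrix (Fin 2) (Fin 2) (ZMod q)) 1 1).val

/-!
At a prime, summing a primitive additive character over the nonzero multiples of `m` gives
`c_p(m) = p · [p ∣ m] - 1`. Hence the sum over `SL₂(𝔽_p)` is `p · #{w | d(w) = n} - |SL₂(𝔽_p)|`.
For `d ≠ 0` the fibre `{w | d(w) = d}` is parametrised by the off-diagonal entries `(b, c)`, so it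
has `p²` elements, while `{w | d(w) = 0}` is parametrised by `(a, b)` with `b ≠ 0`; thus
`|SL₂(𝔽_p)| = p (p² - 1)`, and the average is `(p³ - p (p² - 1)) / (p (p² - 1)) = 1 / (p² - 1)`.
-/

open Finset Matrix
open scoped MatrixGroups

theorem AddChar.sum_units_mulShift {F R : Type*} [Field F] [Fintype F] [DecidableEq F]
    [CommRing R] [IsDomain R] {ψ : AddChar F R} (hψ : ψ.IsPrimitive) (b : F) :
    ∑ a : Fˣ, ψ (a * b) = (if b = 0 then (Fintype.card F : R) else 0) - 1 := by
  have h := sum_mulShift b hψ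
  rw [Fintype.sum_eq_add_sum_subtype_ne _ 0, zero_mul, map_zero_eq_one,
    ← Fintype.sum_equiv unitsEquivNeZero (fun a : Fˣ => ψ (a * b))
      (fun x : {x : F // x ≠ 0} => ψ (x * b)) fun _ => rfl] at h
  push_cast at h
  linear_combination h

theorem ramanujanSum_eq_sum_stdAddChar (q : ℕ) [NeZero q] (m : ℤ) :
    ramanujanSum q m = ∑ a : (ZMod q)ˣ, ZMod.stdAddChar ((a : ZMod q) * (m : ZMod q)) := by
  refine sum_congr rfl fun a _ => ?_
  have hcast : (a : ZMod q) * (m : ZMod q) = (((a : ZMod q).val * m : ℤ) : ZMod q) := by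
    push_cast
    rw [ZMod.natCast_zmod_val]
  rw [hcast, ZMod.stdAddChar_coe]
  push_cast
  ring_nf

theorem ramanujanSum_prime (p : ℕ) [Fact p.Prime] (m : ℤ) :
    ramanujanSum p m = (if (m : ZMod p) = 0 then (p : ℂ) else 0) - 1 := by
  rw [ramanujanSum_eq_sum_stdAddChar, AddChar.sum_units_mulShift (ZMod.isPrimitive_stdAddChar p),
    ZMod.card]

namespace Matrix.SpecialLinearGroup

variable {K : Type*} [Field K]

theorem fin_two_det_eq_one (w : SL(2, K)) : w 0 0 * w 1 1 - w 0 1 * w 1 0 = 1 := by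
  rw [← det_fin_two]
  exact w.det_coe

def bottomRightFiberEquivOfNeZero {d : K} (hd : d ≠ 0) :
    {w : SL(2, K) // w 1 1 = d} ≃ K × K where
  toFun w := (w.1 0 1, w.1 1 0)
  invFun bc := ⟨⟨!![(1 + bc.1 * bc.2) / d, bc.1; bc.2, d], by
    rw [det_fin_two_of]; field_simp; ring⟩, rfl⟩
  left_inv := by
    rintro ⟨w, rfl⟩
    have hdet := fin_two_det_eq_one w
    ext i j
    fin_cases i <;> fin_cases j
    · change (1 + w 0 1 * w 1 0) / w 1 1 = w 0 0
      rw [div_eq_iff hd]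
      linear_combination -hdet
    all_goals rfl
  right_inv _ := rfl

def bottomRightFiberZeroEquiv : {w : SL(2, K) // w 1 1 = 0} ≃ K × Kˣ where
  toFun w := (w.1 0 0, Units.mk0 (w.1 0 1) fun hb => by
    simpa [w.2, hb] using fin_two_det_eq_one w.1)
  invFun ab := ⟨⟨!![ab.1, ab.2; -ab.2⁻¹, 0], by simp [det_fin_two_of]⟩, rfl⟩
  left_inv := by
    rintro ⟨w, hw⟩
    have hdet := fin_two_det_eq_one w
    ext i j
    fin_cases i <;> fin_cases j
    · rfl
    · rfl
    · rw [hw, mul_zero, zero_sub] at hdet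
      simpa [neg_eq_iff_eq_neg] using inv_eq_of_mul_eq_one_right (by linear_combination hdet)
    · exact hw.symm
  right_inv _ := by ext <;> simp

variable [Fintype K] [DecidableEq K]

theorem card_bottomRightFiber_of_ne_zero {d : K} (hd : d ≠ 0) :
    Fintype.card {w : SL(2, K) // w 1 1 = d} = Fintype.card K ^ 2 := by
  rw [Fintype.card_congr (bottomRightFiberEquivOfNeZero hd), Fintype.card_prod, sq]

theorem card_bottomRightFiber_zero :
    Fintype.card {w : SL(2, K) // w 1 1 = 0} = Fintype.card K * (Fintype.card K - 1) := by
  rw [Fintype.card_congr bottomRightFiberZeroEquiv, Fintype.card_prod, Fintype.card_units]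

theorem card_fin_two :
    Fintype.card SL(2, K) = Fintype.card K * (Fintype.card K ^ 2 - 1) := by
  have hq : 1 ≤ Fintype.card K := Fintype.card_pos
  have hq2 : 1 ≤ Fintype.card K ^ 2 := Nat.one_le_pow _ _ hq
  rw [← Fintype.card_congr (Equiv.sigmaFiberEquiv fun w : SL(2, K) => w 1 1), Fintype.card_sigma,
    Fintype.sum_eq_add_sum_subtype_ne _ 0, card_bottomRightFiber_zero,
    Fintype.sum_congr _ _ fun d => card_bottomRightFiber_of_ne_zero d.2, sum_const, card_univ,
    Fintype.card_subtype_compl, Fintype.card_subtype_eq, smul_eq_mul]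
  zify [hq, hq2]
  ring

end Matrix.SpecialLinearGroup

theorem sum_ramanujanSum_dEntry_sub (p : ℕ) [Fact p.Prime] (n : ℤ) :
    ∑ w : SL(2, ZMod p), ramanujanSum p (dEntry w - n)
      = p * Fintype.card {w : SL(2, ZMod p) // w 1 1 = n} - Fintype.card SL(2, ZMod p) := by
  have hcast (w : SL(2, ZMod p)) : ((dEntry w - n : ℤ) : ZMod p) = w 1 1 - n := by
    rw [dEntry, Int.cast_sub, Int.cast_natCast, ZMod.natCast_zmod_val]
  simp only [ramanujanSum_prime, hcast, sub_eq_zero, sum_sub_distrib, sum_ite, sum_const_zero,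
    sum_const, card_univ, Fintype.card_subtype]
  rw [add_zero, nsmul_eq_mul, nsmul_eq_mul, mul_one, mul_comm]

theorem stmt1 (p : ℕ) [Fact p.Prime] (n : ℤ) (hn : ¬ (p : ℤ) ∣ n) :
    (1 / (Fintype.card (Matrix.SpecialLinearGroup (Fin 2) (ZMod p)) : ℂ)) *
      ∑ w : Matrix.SpecialLinearGroup (Fin 2) (ZMod p), ramanujanSum p (dEntry w - n)
    = 1 / ((p : ℂ) ^ 2 - 1) := by
  have hp : p.Prime := Fact.out
  have hn' : (n : ZMod p) ≠ 0 := by rwa [Ne, ZMod.intCast_zmod_eq_zero_iff_dvd]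
  have hp0 : (p : ℂ) ≠ 0 := Nat.cast_ne_zero.2 hp.ne_zero
  have hp2 : (p : ℂ) ^ 2 - 1 ≠ 0 := by
    rw [sub_ne_zero]
    exact_mod_cast (Nat.one_lt_pow two_ne_zero hp.one_lt).ne'
  rw [sum_ramanujanSum_dEntry_sub, SpecialLinearGroup.card_bottomRightFiber_of_ne_zero hn',
    SpecialLinearGroup.card_fin_two, ZMod.card]
  push_cast [Nat.cast_sub (Nat.one_le_pow _ _ hp.pos)]
  field_simp
  ring
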